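/- A differentiable function f: ℝ^p → ℝ has L-Lipschitz continuous gradient if and only if both functions x ↦ (L/2)‖x‖² + f(x) and x ↦ (L/2)‖x‖² − f(x) are convex. -/

import Mathlib

open scoped InnerProductSpace
noncomputable section

/-- `ℝ^p` as a Euclidean space. -/
abbrev Euc (p : ℕ) := EuclideanSpace ℝ (Fin p)

variable {p : ℕ}

/-!
Write `D_f(x, y) = f y - f x - ⟪∇f x, y - x⟫` for the Bregman divergence. A differentiable
function is convex iff `D ≥ 0`, and `D` of `L/2 ‖·‖²` is `L/2 ‖y - x‖²`, so the two convexity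
conditions together say `|D_f(x, y)| ≤ L/2 ‖y - x‖²`. This bound follows from the Lipschitz
gradient by integrating along the segment `[x, y]`. Conversely, it makes `g = L/2 ‖·‖² + f`
convex with `0 ≤ D_g ≤ L ‖y - x‖²`, and the co-coercivity
`‖∇g x - ∇g y‖² ≤ 2L ⟪∇g x - ∇g y, x - y⟫` of such functions, once expanded, is exactly
`‖∇f x - ∇f y‖ ≤ L ‖x - y‖`.
-/

open Set Filter Topology AffineMap NNReal

section Bregman

variable {E : Type*} [NormedAddCommGroup E] [InnerProductSpace ℝ E]

def bregman (f : E → ℝ) (f' : E → E) (x y : E) : ℝ := f y - f x - ⟪f' x, y - x⟫_ℝ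

lemma bregman_add (f g : E → ℝ) (f' g' : E → E) (x y : E) :
    bregman (fun z => f z + g z) (fun z => f' z + g' z) x y =
      bregman f f' x y + bregman g g' x y := by
  simp only [bregman, inner_add_left]; ring

lemma bregman_sub (f g : E → ℝ) (f' g' : E → E) (x y : E) :
    bregman (fun z => f z - g z) (fun z => f' z - g' z) x y =
      bregman f f' x y - bregman g g' x y := by
  simp only [bregman, inner_sub_left]; ring

lemma bregman_half_mul_norm_sq (L : ℝ) (x y : E) :
    bregman (fun z => L / 2 * ‖z‖ ^ 2) (fun z => L • z) x y = L / 2 * ‖y - x‖ ^ 2 := by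
  simp only [bregman, norm_sub_sq_real, real_inner_smul_left, inner_sub_right,
    real_inner_self_eq_norm_sq, real_inner_comm x y]
  ring

lemma bregman_add_bregman_swap (g : E → ℝ) (g' : E → E) (x y : E) :
    bregman g g' x y + bregman g g' y x = ⟪g' x - g' y, x - y⟫_ℝ := by
  simp only [bregman, inner_sub_left, inner_sub_right, real_inner_comm]; ring

lemma convexOn_univ_of_bregman_nonneg {g : E → ℝ} {g' : E → E}
    (h : ∀ x y, 0 ≤ bregman g g' x y) : ConvexOn ℝ univ g := by
  refine ⟨convex_univ, fun x _ y _ a b ha hb hab => ?_⟩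
  set z := a • x + b • y
  -- the tangent plane at `z` is an affine minorant of `g` that is exact at `z`
  have hz : a • (x - z) + b • (y - z) = 0 := by
    simp only [z, smul_sub, ← add_sub_add_comm, ← add_smul, hab, one_smul, sub_self]
  have hinner : a * ⟪g' z, x - z⟫_ℝ + b * ⟪g' z, y - z⟫_ℝ = 0 := by
    rw [← real_inner_smul_right, ← real_inner_smul_right, ← inner_add_right, hz,
      inner_zero_right]
  have hx := mul_nonneg ha (h z x)
  have hy := mul_nonneg hb (h z y)
  simp only [bregman, smul_eq_mul] at hx hy ⊢
  have hgz : g z = (a + b) * g z := by rw [hab, one_mul]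
  nlinarith

lemma norm_sub_sq_div_le_bregman {g : E → ℝ} {g' : E → E} {M : ℝ} (hM : 0 < M)
    (h0 : ∀ x y, 0 ≤ bregman g g' x y) (hM' : ∀ x y, bregman g g' x y ≤ M / 2 * ‖y - x‖ ^ 2)
    (x y : E) : ‖g' y - g' x‖ ^ 2 / (2 * M) ≤ bregman g g' x y := by
  set d := g' y - g' x
  -- compare `x` and `y` through the point reached from `y` by a gradient step of length `1 / M`
  set z := y - M⁻¹ • d
  have hsplit : bregman g g' x y = bregman g g' x z - bregman g g' y z + M⁻¹ * ‖d‖ ^ 2 := by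
    simp only [bregman, z, d, sub_sub_cancel_left, inner_neg_right, real_inner_smul_right,
      ← real_inner_self_eq_norm_sq, inner_sub_left, inner_sub_right]
    ring
  have hz : ‖z - y‖ ^ 2 = M⁻¹ ^ 2 * ‖d‖ ^ 2 := by
    simp [z, norm_smul, mul_pow, abs_of_pos hM]
  rw [hsplit]
  have hstep : M / 2 * (M⁻¹ ^ 2 * ‖d‖ ^ 2) = ‖d‖ ^ 2 / (2 * M) := by field_simp
  have hinv : M⁻¹ * ‖d‖ ^ 2 = ‖d‖ ^ 2 / (2 * M) + ‖d‖ ^ 2 / (2 * M) := by field_simp; ring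
  linarith [h0 x z, hz ▸ hM' y z]

lemma norm_sub_sq_le_mul_inner_of_bregman_le {g : E → ℝ} {g' : E → E} {M : ℝ} (hM : 0 < M)
    (h0 : ∀ x y, 0 ≤ bregman g g' x y) (hM' : ∀ x y, bregman g g' x y ≤ M / 2 * ‖y - x‖ ^ 2)
    (x y : E) : ‖g' x - g' y‖ ^ 2 ≤ M * ⟪g' x - g' y, x - y⟫_ℝ := by
  have hxy := norm_sub_sq_div_le_bregman hM h0 hM' x y
  have hyx := norm_sub_sq_div_le_bregman hM h0 hM' y x
  rw [norm_sub_rev] at hxy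
  have hhalf : ‖g' x - g' y‖ ^ 2 / M = 2 * (‖g' x - g' y‖ ^ 2 / (2 * M)) := by field_simp
  rw [← bregman_add_bregman_swap g, ← div_le_iff₀' hM]
  linarith

lemma norm_sub_le_of_abs_bregman_le {f : E → ℝ} {f' : E → E} {L : ℝ} (hL : 0 < L)
    (h : ∀ x y, |bregman f f' x y| ≤ L / 2 * ‖y - x‖ ^ 2) (x y : E) :
    ‖f' x - f' y‖ ≤ L * ‖x - y‖ := by
  -- co-coercivity of `L/2 ‖·‖² + f` with constant `2L`
  have hg : ∀ x y, bregman (fun z => L / 2 * ‖z‖ ^ 2 + f z) (fun z => L • z + f' z) x y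
      = L / 2 * ‖y - x‖ ^ 2 + bregman f f' x y := fun x y => by
    rw [bregman_add, bregman_half_mul_norm_sq]
  have hco := norm_sub_sq_le_mul_inner_of_bregman_le (M := 2 * L) (by positivity)
    (fun x y => by linarith [hg x y, (abs_le.1 (h x y)).1])
    (fun x y => by linarith [hg x y, (abs_le.1 (h x y)).2]) x y
  have hexp : (L • x + f' x) - (L • y + f' y) = L • (x - y) + (f' x - f' y) := by module
  rw [hexp, norm_add_sq_real, inner_add_left, norm_smul, real_inner_smul_left,
    real_inner_smul_left, real_inner_self_eq_norm_sq, Real.norm_of_nonneg hL.le,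
    real_inner_comm (x - y)] at hco
  have hsq : ‖f' x - f' y‖ ^ 2 ≤ (L * ‖x - y‖) ^ 2 := by nlinarith
  exact (sq_le_sq₀ (norm_nonneg _) (by positivity)).1 hsq

lemma lipschitzWith_of_abs_bregman_le {f : E → ℝ} {f' : E → E} {L : ℝ} (hL : 0 ≤ L)
    (h : ∀ x y, |bregman f f' x y| ≤ L / 2 * ‖y - x‖ ^ 2) :
    LipschitzWith (Real.toNNReal L) f' := by
  refine LipschitzWith.of_dist_le_mul fun x y => ?_
  rw [dist_eq_norm, dist_eq_norm, Real.coe_toNNReal L hL]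
  -- co-coercivity needs a positive constant, so pass to the limit from every `c > L`
  have hlim : Tendsto (fun c => c * ‖x - y‖) (𝓝[>] L) (𝓝 (L * ‖x - y‖)) :=
    ((continuous_id.mul continuous_const).tendsto L).mono_left nhdsWithin_le_nhds
  refine ge_of_tendsto hlim (eventually_nhdsWithin_of_forall fun c (hc : L < c) => ?_)
  refine norm_sub_le_of_abs_bregman_le (hL.trans_lt hc) (fun x y => (h x y).trans ?_) x y
  gcongr

variable [CompleteSpace E]

lemma HasGradientAt.add {f g : E → ℝ} {f' g' x : E} (hf : HasGradientAt f f' x)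
    (hg : HasGradientAt g g' x) : HasGradientAt (fun z => f z + g z) (f' + g') x := by
  rw [hasGradientAt_iff_hasFDerivAt, map_add]
  exact hf.hasFDerivAt.add hg.hasFDerivAt

lemma HasGradientAt.sub {f g : E → ℝ} {f' g' x : E} (hf : HasGradientAt f f' x)
    (hg : HasGradientAt g g' x) : HasGradientAt (fun z => f z - g z) (f' - g') x := by
  rw [hasGradientAt_iff_hasFDerivAt, map_sub]
  exact hf.hasFDerivAt.sub hg.hasFDerivAt

lemma hasGradientAt_half_mul_norm_sq (L : ℝ) (x : E) :
    HasGradientAt (fun z => L / 2 * ‖z‖ ^ 2) (L • x) x := by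
  rw [hasGradientAt_iff_hasFDerivAt]
  refine ((hasStrictFDerivAt_norm_sq x).hasFDerivAt.const_mul (L / 2)).congr_fderiv ?_
  ext v
  simp
  ring

lemma HasGradientAt.hasDerivAt_comp_lineMap {f : E → ℝ} {g x y : E} {t : ℝ}
    (h : HasGradientAt f g (lineMap x y t)) :
    HasDerivAt (fun s => f (lineMap x y s)) ⟪g, y - x⟫_ℝ t := by
  simpa [InnerProductSpace.toDual_apply_apply, Function.comp_def] using
    (hasGradientAt_iff_hasFDerivAt.1 h).comp_hasDerivAt t hasDerivAt_lineMap

lemma ConvexOn.bregman_nonneg {g : E → ℝ} {g' : E → E} (hg : ∀ x, HasGradientAt g (g' x) x)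
    (hc : ConvexOn ℝ univ g) (x y : E) : 0 ≤ bregman g g' x y := by
  have hd : HasDerivAt (g ∘ lineMap x y) ⟪g' x, y - x⟫_ℝ (0 : ℝ) :=
    HasGradientAt.hasDerivAt_comp_lineMap (by simpa using hg x)
  have := (hc.comp_affineMap (lineMap x y)).le_slope_of_hasDerivAt (mem_univ 0) (mem_univ 1)
    zero_lt_one hd
  simp only [slope_def_field, Function.comp_apply, lineMap_apply_one, lineMap_apply_zero,
    sub_zero, div_one] at this
  simp only [bregman]
  linarith

lemma convexOn_univ_iff_bregman_nonneg {g : E → ℝ} {g' : E → E}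
    (hg : ∀ x, HasGradientAt g (g' x) x) :
    ConvexOn ℝ univ g ↔ ∀ x y, 0 ≤ bregman g g' x y :=
  ⟨fun hc => hc.bregman_nonneg hg, convexOn_univ_of_bregman_nonneg⟩

variable {f : E → ℝ} {f' : E → E}

lemma abs_bregman_le_of_lipschitzWith {K : ℝ≥0} (hf : ∀ x, HasGradientAt f (f' x) x)
    (hK : LipschitzWith K f') (x y : E) :
    |bregman f f' x y| ≤ K / 2 * ‖y - x‖ ^ 2 := by
  set φ : ℝ → ℝ := fun t => f (lineMap x y t) - f x - t * ⟪f' x, y - x⟫_ℝ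
  have hφ : ∀ t, HasDerivAt φ ⟪f' (lineMap x y t) - f' x, y - x⟫_ℝ t := fun t => by
    rw [inner_sub_left]
    exact (((hf _).hasDerivAt_comp_lineMap).sub_const (f x)).fun_sub (hasDerivAt_mul_const _)
  have hB : ∀ t : ℝ,
      HasDerivAt (fun t => K / 2 * ‖y - x‖ ^ 2 * t ^ 2) (K * ‖y - x‖ ^ 2 * t) t := fun t =>
    ((hasDerivAt_pow 2 t).const_mul (K / 2 * ‖y - x‖ ^ 2)).congr_deriv (by ring)
  have hbound : ∀ t ∈ Ico (0 : ℝ) 1,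
      ‖⟪f' (lineMap x y t) - f' x, y - x⟫_ℝ‖ ≤ K * ‖y - x‖ ^ 2 * t := by
    intro t ht
    calc ‖⟪f' (lineMap x y t) - f' x, y - x⟫_ℝ‖ ≤ ‖f' (lineMap x y t) - f' x‖ * ‖y - x‖ :=
          norm_inner_le_norm _ _
      _ ≤ K * (t * ‖y - x‖) * ‖y - x‖ := by
          gcongr
          simpa [← dist_eq_norm, dist_lineMap_left, abs_of_nonneg ht.1, dist_comm] using
            hK.dist_le_mul (lineMap x y t) x
      _ = K * ‖y - x‖ ^ 2 * t := by ring
  have := image_norm_le_of_norm_deriv_right_le_deriv_boundary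
    (fun t _ => (hφ t).continuousAt.continuousWithinAt) (fun t _ => (hφ t).hasDerivWithinAt)
    (by simp [φ]) hB hbound (right_mem_Icc.2 zero_le_one)
  simpa [φ, bregman] using this

lemma convexOn_half_mul_norm_sq_add_iff (hf : ∀ x, HasGradientAt f (f' x) x) (L : ℝ) :
    ConvexOn ℝ univ (fun x => L / 2 * ‖x‖ ^ 2 + f x) ↔
      ∀ x y, -(L / 2 * ‖y - x‖ ^ 2) ≤ bregman f f' x y := by
  rw [convexOn_univ_iff_bregman_nonneg fun x => (hasGradientAt_half_mul_norm_sq L x).add (hf x)]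
  simp only [bregman_add, bregman_half_mul_norm_sq, neg_le_iff_add_nonneg']

lemma convexOn_half_mul_norm_sq_sub_iff (hf : ∀ x, HasGradientAt f (f' x) x) (L : ℝ) :
    ConvexOn ℝ univ (fun x => L / 2 * ‖x‖ ^ 2 - f x) ↔
      ∀ x y, bregman f f' x y ≤ L / 2 * ‖y - x‖ ^ 2 := by
  rw [convexOn_univ_iff_bregman_nonneg fun x => (hasGradientAt_half_mul_norm_sq L x).sub (hf x)]
  simp only [bregman_sub, bregman_half_mul_norm_sq, sub_nonneg]

lemma convexOn_half_mul_norm_sq_add_and_sub_iff (hf : ∀ x, HasGradientAt f (f' x) x) (L : ℝ) :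
    ConvexOn ℝ univ (fun x => L / 2 * ‖x‖ ^ 2 + f x) ∧
        ConvexOn ℝ univ (fun x => L / 2 * ‖x‖ ^ 2 - f x) ↔
      ∀ x y, |bregman f f' x y| ≤ L / 2 * ‖y - x‖ ^ 2 := by
  simp only [convexOn_half_mul_norm_sq_add_iff hf, convexOn_half_mul_norm_sq_sub_iff hf,
    abs_le, forall_and]

end Bregman

/-- a differentiable `f : ℝ^p → ℝ` (with gradient `f'`) has `L`-Lipschitz
gradient iff both `x ↦ (L/2)‖x‖² + f(x)` and `x ↦ (L/2)‖x‖² − f(x)` are convex. -/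
theorem statement6
    (f : Euc p → ℝ) (f' : Euc p → Euc p)
    (hf : ∀ x, HasGradientAt f (f' x) x)
    (L : ℝ) (hL : 0 ≤ L) :
    LipschitzWith (Real.toNNReal L) f' ↔
      (ConvexOn ℝ Set.univ (fun x => L/2 * ‖x‖^2 + f x) ∧
        ConvexOn ℝ Set.univ (fun x => L/2 * ‖x‖^2 - f x)) := by
  rw [convexOn_half_mul_norm_sq_add_and_sub_iff hf]
  refine ⟨fun hlip x y => ?_, lipschitzWith_of_abs_bregman_le hL⟩
  simpa [Real.coe_toNNReal L hL] using abs_bregman_le_of_lipschitzWith hf hlip x y
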